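/- arXiv:2308.02859 — 4 statements merged into one kernel-verified Lean document; each statement's English description precedes it below -/
import Mathlib

section
/- If N is a minor of a matroid M, then every circuit-cocircuit intersection of N is also a circuit-cocircuit intersection of M. -/
open Set

namespace Matroid

variable {α : Type*}

/-- A circuit: a minimal dependent set. -/
def IsCircuit' (M : Matroid α) (C : Set α) : Prop :=
  C ⊆ M.E ∧ ¬ M.Indep C ∧ ∀ D, D ⊂ C → M.Indep D

/-- A cocircuit: a circuit of the dual matroid. -/
def IsCocircuit' (M : Matroid α) (C : Set α) : Prop :=
  M✶.IsCircuit' C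

/-- A circuit-cocircuit intersection (CCI). -/
def IsCCI (M : Matroid α) (X : Set α) : Prop :=
  ∃ C K, M.IsCircuit' C ∧ M.IsCocircuit' K ∧ X = C ∩ K

/-- A hyperplane: a maximal proper flat. -/
def IsHyperplane (M : Matroid α) (H : Set α) : Prop :=
  M.IsFlat H ∧ H ≠ M.E ∧ ∀ F, M.IsFlat F → H ⊂ F → F = M.E

/-- The rank of a set: the largest size of an independent subset. -/
noncomputable def rk (M : Matroid α) (A : Set α) : ℕ :=
  sSup {n | ∃ I, I ⊆ A ∧ M.Indep I ∧ I.ncard = n}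

/-- The rank of a matroid. -/
noncomputable def rank (M : Matroid α) : ℕ := M.rk M.E

/-- Deletion of a set from a matroid. -/
def del (M : Matroid α) (D : Set α) : Matroid α := M.restrict (M.E \ D)

/-- Contraction of a set in a matroid. -/
def con (M : Matroid α) (C : Set α) : Matroid α := (M✶.restrict (M.E \ C))✶

/-- `N` is a minor of `M` if it is obtained by a contraction followed by a deletion. -/
def IsMinor' (N M : Matroid α) : Prop := ∃ C D, N = (M.con C).del D

end Matroid

open Matroid

/-! A circuit `C` of `M ／ T` lies in a circuit
`C' ⊆ C ∪ T` of `M`, while a cocircuit `K` of `M ／ T` is a cocircuit of `M` disjoint from `T`;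
hence `C ∩ K = C' ∩ K`. Deletion is dual to contraction and circuit-cocircuit intersections are
self-dual, so deletion follows. -/

namespace Matroid

variable {α : Type*} {M : Matroid α} {C K T D X : Set α}

lemma isCircuit'_iff : M.IsCircuit' C ↔ M.IsCircuit C := by
  rw [isCircuit_iff_forall_ssubset, Dep]
  exact ⟨fun ⟨hCE, hC, hmin⟩ ↦ ⟨⟨hC, hCE⟩, hmin⟩, fun ⟨⟨hC, hCE⟩, hmin⟩ ↦ ⟨hCE, hC, hmin⟩⟩

lemma isCocircuit'_iff : M.IsCocircuit' K ↔ M.IsCocircuit K :=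
  isCircuit'_iff

lemma isCCI_iff : M.IsCCI X ↔ ∃ C K, M.IsCircuit C ∧ M.IsCocircuit K ∧ X = C ∩ K := by
  simp only [IsCCI, isCircuit'_iff, isCocircuit'_iff]

lemma con_eq_contract (M : Matroid α) (T : Set α) : M.con T = M ／ T := rfl

lemma del_eq_delete (M : Matroid α) (D : Set α) : M.del D = M ＼ D := rfl

lemma IsCCI.dual (hX : M.IsCCI X) : M✶.IsCCI X := by
  obtain ⟨C, K, hC, hK, rfl⟩ := isCCI_iff.1 hX
  exact isCCI_iff.2 ⟨K, C, hK, by rwa [isCocircuit_def, dual_dual], inter_comm C K⟩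

lemma IsCCI.of_contract (hX : (M ／ T).IsCCI X) : M.IsCCI X := by
  obtain ⟨C, K, hC, hK, rfl⟩ := isCCI_iff.1 hX
  obtain ⟨C', hC', hCC', hC'CT⟩ := hC.exists_subset_isCircuit_of_contract
  have hKT : Disjoint K T := (subset_sdiff.1 hK.subset_ground).2
  refine isCCI_iff.2 ⟨C', K, hC', hK.of_contract, ?_⟩
  refine (inter_subset_inter_left K hCC').antisymm fun x ⟨hxC', hxK⟩ ↦ ⟨?_, hxK⟩
  exact (hC'CT hxC').resolve_right (hKT.notMem_of_mem_left hxK)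

lemma IsCCI.of_delete (hX : (M ＼ D).IsCCI X) : M.IsCCI X := by
  have h : (M✶ ／ D).IsCCI X := dual_delete M D ▸ hX.dual
  simpa using h.of_contract.dual

end Matroid

theorem stmt_2 {α : Type*} (M N : Matroid α) (hNM : N.IsMinor' M)
    (X : Set α) (hX : N.IsCCI X) : M.IsCCI X := by
  obtain ⟨T, D, rfl⟩ := hNM
  rw [del_eq_delete, con_eq_contract] at hX
  exact hX.of_delete.of_contract
end

section
/- Let N be a CCI-envelope of a CCI X of size k ≥ 4, Y = E(N)\X, and J ⊆ Y with |J| = k−3. Then the sets (closure(J ∪ {x}) ∩ X) for x ∈ X partition X into at least two blocks, and for each block X_i the set J ∪ X_i is a hyperplane of N. -/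
open Set

/-!
Every base of `N` has `k - 1` elements. As `X` is a cocircuit, `Y ∪ {x}` is spanning, hence a
base, for each `x ∈ X`; so `Y` is an independent flat. For `x ∈ X` the set `J ∪ {x}` is then
independent of size `k - 2`, so its closure `H` is a hyperplane, and `H` meets `Y` only in `J`,
whence `H = J ∪ (H ∩ X)`. Since `X` avoids `cl J ⊆ Y`, the exchange property makes the blocks
`H ∩ X` partition `X`. They cannot all coincide: `X` would then lie in one hyperplane, although it
contains the base `X - x`.
-/

open Matroid

namespace Matroid

variable {α : Type*} {M : Matroid α} {B C I J K S H X Y : Set α} {x : α}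

lemma rank_eq_ncard_of_isBase [M.Finite] (hB : M.IsBase B) : M.rank = B.ncard := by
  refine IsGreatest.csSup_eq ⟨⟨B, hB.subset_ground, hB.indep, rfl⟩, ?_⟩
  rintro n ⟨I, -, hI, rfl⟩
  obtain ⟨B', hB', hIB'⟩ := hI.exists_isBase_superset
  calc I.ncard ≤ B'.ncard := ncard_le_ncard hIB' (M.ground_finite.subset hB'.subset_ground)
    _ = B.ncard := hB'.ncard_eq_ncard_of_isBase hB

lemma Indep.isBase_of_ncard_eq_rank [M.Finite] (hI : M.Indep I) (hcard : I.ncard = M.rank) :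
    M.IsBase I := by
  obtain ⟨B, hB, hIB⟩ := hI.exists_isBase_superset
  rwa [eq_of_subset_of_ncard_le hIB (by rw [← rank_eq_ncard_of_isBase hB, hcard])
    (M.ground_finite.subset hB.subset_ground)]

lemma Spanning.isBase_of_ncard_eq_rank [M.Finite] (hS : M.Spanning S) (hcard : S.ncard = M.rank) :
    M.IsBase S := by
  obtain ⟨B, hB, hBS⟩ := hS.exists_isBase_subset
  rwa [← eq_of_subset_of_ncard_le hBS (by rw [← rank_eq_ncard_of_isBase hB, hcard])
    (M.ground_finite.subset hS.subset_ground)]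

lemma IsCircuit'.spanning_of_ncard [M.Finite] (hC : M.IsCircuit' C)
    (hcard : C.ncard = M.rank + 1) : M.Spanning C := by
  obtain ⟨x, hx⟩ := nonempty_of_ncard_ne_zero (s := C) (by omega)
  have hbase : M.IsBase (C \ {x}) :=
    (hC.2.2 _ (sdiff_singleton_ssubset.2 hx)).isBase_of_ncard_eq_rank
      (by rw [ncard_sdiff_singleton_of_mem hx, hcard, Nat.add_sub_cancel])
  exact hbase.spanning.superset sdiff_subset hC.1

lemma IsCocircuit'.spanning_insert_compl (hK : M.IsCocircuit' K) (hx : x ∈ K) :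
    M.Spanning (insert x (M.E \ K)) := by
  have hcoind : M.Coindep (K \ {x}) := hK.2.2 _ (sdiff_singleton_ssubset.2 hx)
  have hKE : K ⊆ M.E := hK.1
  convert hcoind.compl_spanning using 1
  ext e
  have := @hKE e
  by_cases e = x <;> simp_all

lemma Indep.closure_eq_self_of_forall_insert_indep (hI : M.Indep I)
    (h : ∀ e ∈ M.E \ I, M.Indep (insert e I)) : M.closure I = I := by
  refine (M.subset_closure I).antisymm' fun e he ↦ by_contra fun heI ↦ ?_
  have heE : e ∈ M.E \ I := ⟨mem_ground_of_mem_closure he, heI⟩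
  exact ((hI.insert_indep_iff_of_notMem heI).1 (h e heE)).2 he

lemma closure_insert_inter_eq (hY : M.Indep Y) (hYcl : M.closure Y = Y) (hJY : J ⊆ Y)
    (hx : x ∉ Y) : M.closure (insert x J) ∩ Y = J := by
  refine subset_antisymm (fun e ⟨he, heY⟩ ↦ by_contra fun heJ ↦ hx ?_) fun e heJ ↦
    ⟨M.mem_closure_of_mem' (mem_insert_of_mem x heJ) (hY.subset_ground (hJY heJ)), hJY heJ⟩
  have heJcl : e ∉ M.closure J :=
    ((hY.subset hJY).insert_indep_iff_of_notMem heJ).1 (hY.subset (insert_subset heY hJY)) |>.2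
  rw [← hYcl]
  exact M.closure_subset_closure (insert_subset heY hJY) (closure_exchange ⟨he, heJcl⟩).1

lemma union_closure_insert_inter_eq (hY : M.Indep (M.E \ X))
    (hYcl : M.closure (M.E \ X) = M.E \ X) (hJ : J ⊆ M.E \ X) (hx : x ∈ X) :
    J ∪ (M.closure (insert x J) ∩ X) = M.closure (insert x J) := by
  have hground := M.closure_subset_ground (insert x J)
  nth_rw 1 [← closure_insert_inter_eq hY hYcl hJ (fun h ↦ h.2 hx)]
  ext e
  simp only [mem_union, mem_inter_iff, mem_sdiff]
  have := @hground e
  tauto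

lemma closure_insert_inter_eq_or_disjoint (hX : Disjoint X (M.closure J)) (x y : α) :
    M.closure (insert x J) ∩ X = M.closure (insert y J) ∩ X ∨
      Disjoint (M.closure (insert x J) ∩ X) (M.closure (insert y J) ∩ X) := by
  refine (disjoint_or_nonempty_inter _ _).symm.imp_left ?_
  rintro ⟨z, ⟨hzx, hzX⟩, hzy, -⟩
  have hzJ : z ∉ M.closure J := hX.notMem_of_mem_left hzX
  rw [← closure_insert_congr ⟨hzx, hzJ⟩, closure_insert_congr ⟨hzy, hzJ⟩]

lemma isHyperplane_closure_of_indep [M.Finite] (hI : M.Indep I) (hcard : I.ncard + 1 = M.rank) :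
    M.IsHyperplane (M.closure I) := by
  refine ⟨M.isFlat_closure I, fun hsp ↦ ?_, fun F hF hIF ↦ ?_⟩
  · have hbase := hI.isBase_of_spanning ((spanning_iff_closure_eq hI.subset_ground).2 hsp)
    have := rank_eq_ncard_of_isBase hbase
    omega
  obtain ⟨e, heF, heI⟩ := exists_of_ssubset hIF
  have heI' : e ∉ I := fun h ↦ heI (M.subset_closure I hI.subset_ground h)
  have hbase : M.IsBase (insert e I) :=
    ((hI.insert_indep_iff_of_notMem heI').2 ⟨hF.subset_ground heF, heI⟩).isBase_of_ncard_eq_rank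
      (by rw [ncard_insert_of_notMem heI' (M.ground_finite.subset hI.subset_ground), hcard])
  refine hF.subset_ground.antisymm ?_
  rw [← hbase.closure_eq, ← hF.closure]
  exact M.closure_subset_closure (insert_subset heF ((M.subset_closure I).trans hIF.subset))

lemma IsHyperplane.not_subset_of_spanning (hH : M.IsHyperplane H) (hS : M.Spanning S) :
    ¬ S ⊆ H := fun hSH ↦
  hH.2.1 <| hH.1.subset_ground.antisymm <|
    hS.closure_eq ▸ hH.1.closure ▸ M.closure_subset_closure hSH

end Matroid

theorem stmt_5_general {α : Type*} (N : Matroid α) (k : ℕ) (hk : 4 ≤ k)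
    (hE : N.E.ncard = 2 * k - 2) (hr : N.rank = k - 1)
    (X : Set α) (hXcard : X.ncard = k)
    (hXc : N.IsCircuit' X) (hXcc : N.IsCocircuit' X)
    (J : Set α) (hJ : J ⊆ N.E \ X) (hJcard : J.ncard = k - 3) :
    (∀ x ∈ X, x ∈ N.closure (J ∪ {x}) ∩ X) ∧
    (∀ x ∈ X, ∀ y ∈ X,
      N.closure (J ∪ {x}) ∩ X = N.closure (J ∪ {y}) ∩ X ∨
      Disjoint (N.closure (J ∪ {x}) ∩ X) (N.closure (J ∪ {y}) ∩ X)) ∧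
    (∃ x ∈ X, ∃ y ∈ X, N.closure (J ∪ {x}) ∩ X ≠ N.closure (J ∪ {y}) ∩ X) ∧
    (∀ x ∈ X, N.IsHyperplane (J ∪ (N.closure (J ∪ {x}) ∩ X))) := by
  have : N.Finite := ⟨finite_of_ncard_pos (by omega)⟩
  have hXE : X ⊆ N.E := hXc.1
  have hYx : ∀ x ∈ X, N.IsBase (insert x (N.E \ X)) := fun x hx ↦
    (hXcc.spanning_insert_compl hx).isBase_of_ncard_eq_rank <| by
      rw [ncard_insert_of_notMem (fun h ↦ h.2 hx) (N.ground_finite.subset sdiff_subset),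
        ncard_sdiff hXE (N.ground_finite.subset hXE), hE, hXcard, hr]
      omega
  obtain ⟨x₀, hx₀⟩ := nonempty_of_ncard_ne_zero (s := X) (by omega)
  have hY : N.Indep (N.E \ X) := (hYx x₀ hx₀).indep.subset (subset_insert _ _)
  have hYcl : N.closure (N.E \ X) = N.E \ X := hY.closure_eq_self_of_forall_insert_indep
    fun e he ↦ (hYx e (by simpa [hXE] using he)).indep
  have hXJ : Disjoint X (N.closure J) :=
    disjoint_sdiff_right.mono_right (hYcl ▸ N.closure_subset_closure hJ)
  have hhyp : ∀ x ∈ X, N.IsHyperplane (N.closure (insert x J)) := fun x hx ↦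
    isHyperplane_closure_of_indep ((hYx x hx).indep.subset (insert_subset_insert hJ)) <| by
      rw [ncard_insert_of_notMem (fun h ↦ (hJ h).2 hx)
        (N.ground_finite.subset (hJ.trans sdiff_subset)), hJcard, hr]
      omega
  have hmem : ∀ x ∈ X, x ∈ N.closure (insert x J) ∩ X := fun x hx ↦
    ⟨N.mem_closure_of_mem (mem_insert x J) (insert_subset (hXE hx) (hJ.trans sdiff_subset)), hx⟩
  simp only [union_singleton]
  refine ⟨hmem, fun x _ y _ ↦ closure_insert_inter_eq_or_disjoint hXJ x y, ?_, fun x hx ↦ ?_⟩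
  · obtain ⟨y, hy, hyH⟩ := not_subset.1 <|
      (hhyp x₀ hx₀).not_subset_of_spanning (hXc.spanning_of_ncard (by omega))
    exact ⟨x₀, hx₀, y, hy, fun h ↦ hyH (h ▸ hmem y hy).1⟩
  · rw [union_closure_insert_inter_eq hY hYcl hJ hx]
    exact hhyp x hx

theorem stmt_5 {α : Type*} (N : Matroid α) (k : ℕ) (hk : 4 ≤ k)
    (hE : N.E.ncard = 2 * k - 2) (hr : N.rank = k - 1) (hr' : N✶.rank = k - 1)
    (X : Set α) (hXcard : X.ncard = k)
    (hXc : N.IsCircuit' X) (hXcc : N.IsCocircuit' X)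
    (J : Set α) (hJ : J ⊆ N.E \ X) (hJcard : J.ncard = k - 3) :
    (∀ x ∈ X, x ∈ N.closure (J ∪ {x}) ∩ X) ∧
    (∀ x ∈ X, ∀ y ∈ X,
      N.closure (J ∪ {x}) ∩ X = N.closure (J ∪ {y}) ∩ X ∨
      Disjoint (N.closure (J ∪ {x}) ∩ X) (N.closure (J ∪ {y}) ∩ X)) ∧
    (∃ x ∈ X, ∃ y ∈ X, N.closure (J ∪ {x}) ∩ X ≠ N.closure (J ∪ {y}) ∩ X) ∧
    (∀ x ∈ X, N.IsHyperplane (J ∪ (N.closure (J ∪ {x}) ∩ X))) :=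
  stmt_5_general N k hk hE hr X hXcard hXc hXcc J hJ hJcard
end

section
/- Let N be a CCI-envelope of a CCI X of size k ≥ 4, and let (J; X₁, X₂) and (J'; X₁', X₂') be two hyperplane-partitions of X with J ≠ J'. Then {X₁, X₂} ≠ {X₁', X₂'} as partitions of X. -/
open Set

open Matroid

/-! If `(J; X₁, X₂)` and `(J'; X₁, X₂)` were both hyperplane-partitions with `J ≠ J'`, then
`J ∪ Xᵢ` and `J' ∪ Xᵢ` would be distinct hyperplanes, so by submodularity
`r((J ∩ J') ∪ Xᵢ) ≤ r(N) - 2` for `i = 1, 2`. Applying submodularity to these two sets gives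
`r((J ∩ J') ∪ X) + r(J ∩ J') ≤ 2 r(N) - 4 = 2k - 6`. But `r((J ∩ J') ∪ X) ≥ |X| - 1 = k - 1`
since `X` is a circuit, and `J ∩ J'` is independent of size at least `k - 4`: it lies in `E \ X`,
which has size `k - 2` and is independent because `X - e` is a cobase for any `e ∈ X`. -/

namespace Matroid

variable {α : Type*} {M : Matroid α} {A C H H' I J J' K S X₁ X₂ : Set α}

section RankFinite

variable [M.RankFinite]

lemma cast_rk_eq_eRk (A : Set α) : (M.rk A : ℕ∞) = M.eRk A := by
  obtain ⟨I, hI⟩ := M.exists_isBasis' A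
  have hIfin : I.Finite := hI.indep.finite
  have hmax : IsGreatest {n | ∃ I, I ⊆ A ∧ M.Indep I ∧ I.ncard = n} I.ncard := by
    refine ⟨⟨I, hI.subset, hI.indep, rfl⟩, ?_⟩
    rintro _ ⟨I', hI'A, hI', rfl⟩
    have h := hI'.encard_le_eRk_of_subset hI'A
    rw [← hI.encard_eq_eRk, ← hIfin.cast_ncard_eq, ← hI'.finite.cast_ncard_eq] at h
    exact_mod_cast h
  rw [rk, hmax.csSup_eq, hIfin.cast_ncard_eq, hI.encard_eq_eRk]

lemma cast_rank_eq_eRank : (M.rank : ℕ∞) = M.eRank := by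
  rw [rank, cast_rk_eq_eRk, eRk_ground]

lemma rk_inter_add_rk_union_le (A B : Set α) :
    M.rk (A ∩ B) + M.rk (A ∪ B) ≤ M.rk A + M.rk B := by
  have h := M.eRk_inter_add_eRk_union_le A B
  simp only [← cast_rk_eq_eRk] at h
  exact_mod_cast h

lemma Indep.rk_eq_ncard (hI : M.Indep I) : M.rk I = I.ncard := by
  have h := cast_rk_eq_eRk (M := M) I
  rw [hI.eRk_eq_encard, ← hI.finite.cast_ncard_eq] at h
  exact_mod_cast h

lemma Indep.ncard_le_rk_of_subset (hI : M.Indep I) (hIA : I ⊆ A) : I.ncard ≤ M.rk A := by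
  have h := hI.encard_le_eRk_of_subset hIA
  rw [← cast_rk_eq_eRk, ← hI.finite.cast_ncard_eq] at h
  exact_mod_cast h

lemma Indep.isBase_of_rank_le_ncard (hI : M.Indep I) (h : M.rank ≤ I.ncard) : M.IsBase I := by
  refine hI.isBase_of_eRk_ge hI.finite ?_
  rw [← cast_rank_eq_eRank, hI.eRk_eq_encard, ← hI.finite.cast_ncard_eq]
  exact_mod_cast h

lemma IsCircuit'.ncard_le_rk_add_one (hC : M.IsCircuit' C) (hCA : C ⊆ A) :
    C.ncard ≤ M.rk A + 1 := by
  obtain ⟨e, he⟩ : C.Nonempty := nonempty_iff_ne_empty.2 fun h ↦ hC.2.1 (h ▸ M.empty_indep)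
  have hCe : M.Indep (C \ {e}) := hC.2.2 _ (sdiff_singleton_ssubset.2 he)
  have h := hCe.ncard_le_rk_of_subset (sdiff_subset.trans hCA)
  rw [ncard_sdiff_singleton_of_mem he] at h
  omega

end RankFinite

lemma IsHyperplane.eq_of_subset (hH : M.IsHyperplane H) (hH' : M.IsHyperplane H')
    (hHH' : H ⊆ H') : H = H' := by
  by_contra hne
  exact hH'.2.1 (hH.2.2 H' hH'.1 (hHH'.ssubset_of_ne hne))

lemma IsHyperplane.closure_union_eq_ground (hH : M.IsHyperplane H) (hS : S ⊆ M.E)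
    (hSH : ¬ S ⊆ H) : M.closure (H ∪ S) = M.E := by
  have hcl := M.subset_closure (H ∪ S) (union_subset hH.1.subset_ground hS)
  exact hH.2.2 _ (isFlat_closure _) <| ssubset_of_subset_not_subset
    (subset_union_left.trans hcl) fun h ↦ hSH (subset_union_right.trans (hcl.trans h))

lemma IsHyperplane.eRk_add_one_eq (hH : M.IsHyperplane H) : M.eRk H + 1 = M.eRank := by
  obtain ⟨f, hfE, hfH⟩ := exists_of_ssubset (hH.1.subset_ground.ssubset_of_ne hH.2.1)
  have hcl : M.closure (H ∪ {f}) = M.E :=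
    hH.closure_union_eq_ground (singleton_subset_iff.2 hfE) (by simpa)
  rw [← eRk_insert_eq_add_one ⟨hfE, by rwa [hH.1.closure]⟩, ← union_singleton,
    ← eRk_closure_eq, hcl, eRk_ground]

lemma IsHyperplane.rk_inter_add_two_le_rank [M.RankFinite] (hH : M.IsHyperplane H)
    (hH' : M.IsHyperplane H') (hne : H ≠ H') : M.rk (H ∩ H') + 2 ≤ M.rank := by
  have hcl : M.closure (H ∪ H') = M.E :=
    hH.closure_union_eq_ground hH'.1.subset_ground fun h ↦ hne (hH'.eq_of_subset hH h).symm
  have hunion : M.eRk (H ∪ H') = M.eRank := by rw [← eRk_closure_eq, hcl, eRk_ground]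
  have hsub := M.eRk_inter_add_eRk_union_le H H'
  have h₁ := hH.eRk_add_one_eq
  have h₂ := hH'.eRk_add_one_eq
  simp only [← cast_rk_eq_eRk, ← cast_rank_eq_eRank] at hunion hsub h₁ h₂
  norm_cast at hunion hsub h₁ h₂
  omega

lemma rk_union_add_two_le_rank_of_isHyperplane [M.RankFinite] {Z : Set α}
    (hJZ : Disjoint J Z) (hJ'Z : Disjoint J' Z) (hJJ' : J ≠ J')
    (hH : M.IsHyperplane (J ∪ Z)) (hH' : M.IsHyperplane (J' ∪ Z)) :
    M.rk ((J ∩ J') ∪ Z) + 2 ≤ M.rank := by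
  rw [inter_union_distrib_right]
  refine hH.rk_inter_add_two_le_rank hH' fun h ↦ hJJ' ?_
  rw [← hJZ.sdiff_eq_left, ← hJ'Z.sdiff_eq_left, ← union_sdiff_right, h, union_sdiff_right]

lemma IsCocircuit'.indep_ground_diff [M.Finite] (hK : M.IsCocircuit' K)
    (hcard : M✶.rank + 1 ≤ K.ncard) : M.Indep (M.E \ K) := by
  obtain ⟨e, he⟩ : K.Nonempty := nonempty_iff_ne_empty.2 fun h ↦ hK.2.1 (h ▸ M✶.empty_indep)
  have hKe : M✶.IsBase (K \ {e}) := by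
    refine (hK.2.2 _ (sdiff_singleton_ssubset.2 he)).isBase_of_rank_le_ncard ?_
    rw [ncard_sdiff_singleton_of_mem he]
    omega
  exact hKe.compl_isBase_of_dual.indep.subset (sdiff_subset_sdiff_right sdiff_subset)

lemma ncard_add_ncard_inter_add_three_le [M.RankFinite]
    (hX : M.IsCircuit' (X₁ ∪ X₂)) (hdisj : Disjoint X₁ X₂)
    (hJX : Disjoint J (X₁ ∪ X₂)) (hJ'X : Disjoint J' (X₁ ∪ X₂)) (hJJ' : J ≠ J')
    (hA : M.Indep (J ∩ J'))
    (hH₁ : M.IsHyperplane (J ∪ X₁)) (hH₂ : M.IsHyperplane (J ∪ X₂))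
    (hH₁' : M.IsHyperplane (J' ∪ X₁)) (hH₂' : M.IsHyperplane (J' ∪ X₂)) :
    (X₁ ∪ X₂).ncard + (J ∩ J').ncard + 3 ≤ 2 * M.rank := by
  have h₁ := rk_union_add_two_le_rank_of_isHyperplane (hJX.mono_right subset_union_left)
    (hJ'X.mono_right subset_union_left) hJJ' hH₁ hH₁'
  have h₂ := rk_union_add_two_le_rank_of_isHyperplane (hJX.mono_right subset_union_right)
    (hJ'X.mono_right subset_union_right) hJJ' hH₂ hH₂'
  have hsub := M.rk_inter_add_rk_union_le ((J ∩ J') ∪ X₁) ((J ∩ J') ∪ X₂)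
  rw [← union_inter_distrib_left, hdisj.inter_eq, union_empty, hA.rk_eq_ncard,
    ← union_union_distrib_left] at hsub
  have hX := hX.ncard_le_rk_add_one (subset_union_right (s := J ∩ J'))
  omega

end Matroid

theorem stmt_7_general {α : Type*} (N : Matroid α) (k : ℕ) (hk : 4 ≤ k)
    (hE : N.E.ncard = 2 * k - 2) (hr : N.rank = k - 1) (hr' : N✶.rank = k - 1)
    (X : Set α) (hXcard : X.ncard = k)
    (hXc : N.IsCircuit' X) (hXcc : N.IsCocircuit' X)
    (J X₁ X₂ : Set α) (hJ : J ⊆ N.E \ X) (hJcard : J.ncard = k - 3)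
    (hX₁₂ : X₁ ∪ X₂ = X) (hdisj : Disjoint X₁ X₂)
    (hH₁ : N.IsHyperplane (J ∪ X₁)) (hH₂ : N.IsHyperplane (J ∪ X₂))
    (J' X₁' X₂' : Set α) (hJ' : J' ⊆ N.E \ X) (hJ'card : J'.ncard = k - 3)
    (hH₁' : N.IsHyperplane (J' ∪ X₁')) (hH₂' : N.IsHyperplane (J' ∪ X₂'))
    (hJJ' : J ≠ J') :
    ¬ ((X₁ = X₁' ∧ X₂ = X₂') ∨ (X₁ = X₂' ∧ X₂ = X₁')) := by
  have : N.Finite := ⟨finite_of_ncard_ne_zero (by omega)⟩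
  have hYfin : (N.E \ X).Finite := N.ground_finite.sdiff
  have hYcard : (N.E \ X).ncard = k - 2 := by
    rw [ncard_sdiff hXc.1 (N.ground_finite.subset hXc.1), hE, hXcard]
    omega
  have hAcard : k - 4 ≤ (J ∩ J').ncard := by
    have := ncard_union_add_ncard_inter J J' (hYfin.subset hJ) (hYfin.subset hJ')
    have := ncard_le_ncard (union_subset hJ hJ') hYfin
    omega
  have hA : N.Indep (J ∩ J') :=
    (hXcc.indep_ground_diff (by omega)).subset (inter_subset_left.trans hJ)
  have hJX : Disjoint J X := disjoint_sdiff_left.mono_left hJ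
  have hJ'X : Disjoint J' X := disjoint_sdiff_left.mono_left hJ'
  subst hX₁₂
  have hbound := fun hH₁' hH₂' ↦
    ncard_add_ncard_inter_add_three_le (J' := J') hXc hdisj hJX hJ'X hJJ' hA hH₁ hH₂ hH₁' hH₂'
  rintro (⟨rfl, rfl⟩ | ⟨rfl, rfl⟩)
  · have := hbound hH₁' hH₂'
    omega
  · have := hbound hH₂' hH₁'
    omega

theorem stmt_7 {α : Type*} (N : Matroid α) (k : ℕ) (hk : 4 ≤ k)
    (hE : N.E.ncard = 2 * k - 2) (hr : N.rank = k - 1) (hr' : N✶.rank = k - 1)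
    (X : Set α) (hXcard : X.ncard = k)
    (hXc : N.IsCircuit' X) (hXcc : N.IsCocircuit' X)
    (J X₁ X₂ : Set α) (hJ : J ⊆ N.E \ X) (hJcard : J.ncard = k - 3)
    (hX₁₂ : X₁ ∪ X₂ = X) (hdisj : Disjoint X₁ X₂)
    (hX₁ne : X₁.Nonempty) (hX₂ne : X₂.Nonempty)
    (hH₁ : N.IsHyperplane (J ∪ X₁)) (hH₂ : N.IsHyperplane (J ∪ X₂))
    (J' X₁' X₂' : Set α) (hJ' : J' ⊆ N.E \ X) (hJ'card : J'.ncard = k - 3)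
    (hX₁₂' : X₁' ∪ X₂' = X) (hdisj' : Disjoint X₁' X₂')
    (hX₁'ne : X₁'.Nonempty) (hX₂'ne : X₂'.Nonempty)
    (hH₁' : N.IsHyperplane (J' ∪ X₁')) (hH₂' : N.IsHyperplane (J' ∪ X₂'))
    (hJJ' : J ≠ J') :
    ¬ ((X₁ = X₁' ∧ X₂ = X₂') ∨ (X₁ = X₂' ∧ X₂ = X₁')) :=
  stmt_7_general N k hk hE hr hr' X hXcard hXc hXcc J X₁ X₂ hJ hJcard hX₁₂ hdisj hH₁ hH₂ J' X₁' X₂'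
    hJ' hJ'card hH₁' hH₂' hJJ'
end

section
/- Let N be a CCI-envelope of a CCI X of size k ≥ 4 with Y = E(N)\X. If some hyperplane-partition or cohyperplane-partition (J; X₀, ...) of X has a block X₀ of size 2, then X\X₀ is a CCI of N of size k−2. -/
open Set

/-! The complement of a hyperplane is a cocircuit. Since `J` avoids `X`, the set `X \ X₀` equals
`X ∩ (E \ (J ∪ X₀))`: the intersection of the circuit `X` with the cocircuit `E \ (J ∪ X₀)` when
`J ∪ X₀` is a hyperplane of `N`, and of the circuit `E \ (J ∪ X₀)` with the cocircuit `X` when it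
is a hyperplane of `N✶`. -/

namespace Matroid

variable {α : Type*} {M : Matroid α} {H : Set α} {e : α}

lemma IsHyperplane.not_spanning (hH : M.IsHyperplane H) : ¬ M.Spanning H :=
  fun hsp ↦ hH.2.1 (hH.1.closure ▸ hsp.closure_eq)

lemma IsHyperplane.spanning_insert (hH : M.IsHyperplane H) (he : e ∈ M.E \ H) :
    M.Spanning (insert e H) := by
  have hsub : insert e H ⊆ M.E := insert_subset he.1 hH.1.subset_ground
  have hHcl : H ⊂ M.closure (insert e H) :=
    ssubset_of_subset_of_ne ((subset_insert e H).trans (M.subset_closure _ hsub))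
      fun h ↦ he.2 (h ▸ M.mem_closure_of_mem' (mem_insert e H) he.1)
  exact (spanning_iff_closure_eq hsub).2 (hH.2.2 _ (M.isFlat_closure _) hHcl)

lemma IsHyperplane.compl_isCocircuit' (hH : M.IsHyperplane H) : M.IsCocircuit' (M.E \ H) := by
  refine ⟨sdiff_subset, fun hind ↦ ?_, fun D hD ↦ ?_⟩
  · have hsp : M.Spanning (M.E \ (M.E \ H)) := Coindep.compl_spanning hind
    rw [sdiff_sdiff_cancel_left hH.1.subset_ground] at hsp
    exact hH.not_spanning hsp
  · obtain ⟨e, he, heD⟩ := exists_of_ssubset hD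
    have hHD : insert e H ⊆ M.E \ D :=
      insert_subset ⟨he.1, heD⟩ fun x hx ↦ ⟨hH.1.subset_ground hx, fun hxD ↦ (hD.subset hxD).2 hx⟩
    exact (coindep_iff_compl_spanning (hD.subset.trans sdiff_subset)).2
      ((hH.spanning_insert he).superset hHD sdiff_subset)

lemma IsHyperplane.compl_isCircuit'_of_dual (hH : M✶.IsHyperplane H) : M.IsCircuit' (M.E \ H) := by
  simpa only [IsCocircuit', dual_dual, dual_ground] using hH.compl_isCocircuit'

end Matroid

open Matroid

lemma Set.sdiff_eq_inter_sdiff_union {α : Type*} {X E J X₀ : Set α} (hXE : X ⊆ E)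
    (hJX : Disjoint J X) : X \ X₀ = X ∩ (E \ (J ∪ X₀)) := by
  ext x
  have hxE : x ∈ X → x ∈ E := @hXE x
  have hxJ : x ∈ X → x ∉ J := fun hxX hxJ ↦ hJX.notMem_of_mem_left hxJ hxX
  simp only [mem_sdiff, mem_inter_iff, mem_union]
  tauto

theorem stmt_14_general {α : Type*} (N : Matroid α) (k : ℕ)
    (X : Set α) (hXcard : X.ncard = k)
    (hXc : N.IsCircuit' X) (hXcc : N.IsCocircuit' X)
    (J X₀ : Set α) (hJ : J ⊆ N.E \ X)
    (hX₀ : X₀ ⊆ X) (hX₀card : X₀.ncard = 2)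
    (hH : N.IsHyperplane (J ∪ X₀) ∨ N✶.IsHyperplane (J ∪ X₀)) :
    N.IsCCI (X \ X₀) ∧ (X \ X₀).ncard = k - 2 := by
  have hX₀fin : X₀.Finite := finite_of_ncard_ne_zero (by omega)
  refine ⟨?_, by rw [ncard_sdiff hX₀ hX₀fin, hXcard, hX₀card]⟩
  rw [sdiff_eq_inter_sdiff_union hXc.1 (subset_sdiff.1 hJ).2]
  rcases hH with hH | hH
  · exact ⟨X, _, hXc, hH.compl_isCocircuit', rfl⟩
  · exact ⟨_, X, hH.compl_isCircuit'_of_dual, hXcc, inter_comm _ _⟩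

theorem stmt_14 {α : Type*} (N : Matroid α) (k : ℕ) (hk : 4 ≤ k)
    (hE : N.E.ncard = 2 * k - 2) (hr : N.rank = k - 1) (hr' : N✶.rank = k - 1)
    (X : Set α) (hXcard : X.ncard = k)
    (hXc : N.IsCircuit' X) (hXcc : N.IsCocircuit' X)
    (J X₀ : Set α) (hJ : J ⊆ N.E \ X) (hJcard : J.ncard = k - 3)
    (hX₀ : X₀ ⊆ X) (hX₀card : X₀.ncard = 2)
    (hH : N.IsHyperplane (J ∪ X₀) ∨ N✶.IsHyperplane (J ∪ X₀)) :
    N.IsCCI (X \ X₀) ∧ (X \ X₀).ncard = k - 2 :=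
  stmt_14_general N k X hXcard hXc hXcc J X₀ hJ hX₀ hX₀card hH
end
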